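/- Let M be an Orlicz function, 1 ≤ p < ∞ and m ≥ 1, n ≥ 1 integers. Then C_p(M, Δ_m^n) = { real sequences x = (x_k)_{k≥1} : there exists ρ > 0 with Σ_{i=1}^∞ ((1/i) Σ_{k=1}^{i} M(|Δ_m^n x_k|/ρ))^p < ∞ } is a complete metric space with respect to the metric f₁(x,y) = Σ_{r=1}^{mn} |x_r − y_r| + inf{ ρ > 0 : (Σ_{i=1}^∞ ((1/i) Σ_{k=1}^{i} M(|Δ_m^n x_k − Δ_m^n y_k|/ρ))^p)^{1/p} ≤ 1 }. -/

import Mathlib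

/-!
Statement 7 (Paper: Proposition 3.2(i)).  `C_p(M, Δ_m^n)` is a complete metric
space with respect to the metric `f₁`.  Sequences are indexed so that `x k`
represents the paper's `x_{k+1}` (so `∑_{r=1}^{mn}` becomes a sum over
`Finset.range (m*n)`).
-/

open scoped ENNReal

/-- An Orlicz function. -/
def IsOrliczFunction (M : ℝ → ℝ) : Prop :=
  ContinuousOn M (Set.Ici 0) ∧ MonotoneOn M (Set.Ici 0) ∧ ConvexOn ℝ (Set.Ici 0) M ∧
    M 0 = 0 ∧ (∀ x : ℝ, 0 < x → 0 < M x) ∧ Filter.Tendsto M Filter.atTop Filter.atTop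

/-- The generalized difference operator: `Δ_m^0 x = x` and
`Δ_m^{n+1} x k = Δ_m^n x k - Δ_m^n x (k + m)`. -/
def delta (m : ℕ) : ℕ → (ℕ → ℝ) → ℕ → ℝ
  | 0, x => x
  | n + 1, x => fun k => delta m n x k - delta m n x (k + m)

/-- The Cesàro average `(1/i) ∑_{k=1}^{i} M (|x_k| / ρ)`, where `i` here is `i+1`. -/
noncomputable def cesTerm (M : ℝ → ℝ) (x : ℕ → ℝ) (ρ : ℝ) (i : ℕ) : ℝ :=
  (1 / (i + 1 : ℝ)) * ∑ k ∈ Finset.range (i + 1), M (|x k| / ρ)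

/-- `∑_{i=1}^∞ ((1/i) ∑_{k=1}^{i} M(|x_k|/ρ))^p`, valued in `ℝ≥0∞`. -/
noncomputable def cesaroSum (M : ℝ → ℝ) (p : ℝ) (x : ℕ → ℝ) (ρ : ℝ) : ℝ≥0∞ :=
  ∑' i : ℕ, ENNReal.ofReal (cesTerm M x ρ i) ^ p

/-- The space `C_p(M, Δ_m^n)`. -/
def CpMDelta (M : ℝ → ℝ) (p : ℝ) (m n : ℕ) : Set (ℕ → ℝ) :=
  {x | ∃ ρ > 0, cesaroSum M p (delta m n x) ρ < ⊤}

/-- The metric `f₁`. -/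
noncomputable def f1 (M : ℝ → ℝ) (p : ℝ) (m n : ℕ) (x y : ℕ → ℝ) : ℝ :=
  (∑ r ∈ Finset.range (m * n), |x r - y r|) +
    sInf {ρ : ℝ | 0 < ρ ∧
      (cesaroSum M p (fun k => delta m n x k - delta m n y k) ρ) ^ (1 / p) ≤ 1}


/-!
Writing `d = Δ_m^n x - Δ_m^n y`, the metric `f₁` is the `ℓ¹` distance of the first `mn`
coordinates plus the Luxemburg norm of `d` for the Cesàro–Orlicz modular
`ρ ↦ ∑ᵢ ((1/i) ∑_{k ≤ i} M(|d_k|/ρ))^p`, and `x ↦ ((x_r)_{r < mn}, Δ_m^n x)` is a bijection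
onto `ℝ^{mn} × ℝ^ℕ`. Convexity of `M` and of `t ↦ t^p` makes the modular convex, which gives the
triangle inequality. Since `M → ∞`, every coordinate of `d` is bounded by a multiple of its norm,
so a Cauchy sequence converges coordinatewise, and lower semicontinuity of the modular (Fatou)
shows that it converges in norm to the coordinatewise limit.
-/

open Filter Topology Set

section Difference

variable {m : ℕ}

theorem delta_succ' (m n : ℕ) (x : ℕ → ℝ) : delta m (n + 1) x = delta m n (delta m 1 x) := by
  induction n with
  | zero => rfl
  | succ n ih =>
    funext k
    show delta m (n + 1) x k - delta m (n + 1) x (k + m) = _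
    rw [ih]
    rfl

theorem eqOn_Iio_of_delta_one (hm : 0 < m) {x y : ℕ → ℝ} {N : ℕ} (h₀ : EqOn x y (Iio m))
    (h₁ : EqOn (delta m 1 x) (delta m 1 y) (Iio N)) : EqOn x y (Iio (N + m)) := by
  intro r
  induction r using Nat.strong_induction_on with
  | _ r ih =>
    intro hr
    rcases lt_or_ge r m with hrm | hrm
    · exact h₀ hrm
    · obtain ⟨k, rfl⟩ := Nat.exists_eq_add_of_le' hrm
      have hk : x k - x (k + m) = y k - y (k + m) := h₁ (mem_Iio.2 (by grind))
      linarith [ih k (by omega) (mem_Iio.2 (by grind))]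

theorem eq_of_delta_eq (hm : 0 < m) (n : ℕ) {x y : ℕ → ℝ} (h₀ : EqOn x y (Iio (m * n)))
    (hΔ : delta m n x = delta m n y) : x = y := by
  induction n generalizing x y with
  | zero => exact hΔ
  | succ n ih =>
    rw [delta_succ' m n x, delta_succ' m n y] at hΔ
    have h₁ : delta m 1 x = delta m 1 y := ih (fun r hr => by
      have hr : r < m * n := hr
      show x r - x (r + m) = y r - y (r + m)
      rw [h₀ (mem_Iio.2 (by nlinarith)), h₀ (mem_Iio.2 (by nlinarith))]) hΔ
    funext r
    exact eqOn_Iio_of_delta_one hm (h₀.mono (Iio_subset_Iio (by nlinarith)))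
      (h₁ ▸ eqOn_refl _ _) (mem_Iio.2 (by omega : r < (r + 1) + m))

theorem exists_delta_one_eq (hm : 0 < m) (a y : ℕ → ℝ) :
    ∃ x : ℕ → ℝ, EqOn x a (Iio m) ∧ delta m 1 x = y := by
  refine ⟨fun k => a (k % m) - ∑ i ∈ Finset.range (k / m), y (i * m + k % m), fun r hr => ?_,
    funext fun k => ?_⟩
  · simp [Nat.mod_eq_of_lt (mem_Iio.1 hr), Nat.div_eq_of_lt (mem_Iio.1 hr)]
  · simp only [delta]
    rw [Nat.add_mod_right, Nat.add_div_right _ hm, Finset.sum_range_succ, Nat.div_add_mod' k m]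
    ring

theorem exists_delta_eq (hm : 0 < m) (n : ℕ) (a w : ℕ → ℝ) :
    ∃ x : ℕ → ℝ, EqOn x a (Iio (m * n)) ∧ delta m n x = w := by
  induction n generalizing a with
  | zero => exact ⟨w, by simp, rfl⟩
  | succ n ih =>
    obtain ⟨y, hy₀, hyΔ⟩ := ih (delta m 1 a)
    obtain ⟨x, hx₀, hxΔ⟩ := exists_delta_one_eq hm a y
    refine ⟨x, ?_, by rw [delta_succ', hxΔ, hyΔ]⟩
    rw [Nat.mul_succ]
    exact eqOn_Iio_of_delta_one hm hx₀ (hxΔ ▸ hy₀)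

end Difference

theorem ENNReal.tsum_le_of_tendsto {ι κ : Type*} {l : Filter κ} [l.NeBot] {f : κ → ι → ℝ≥0∞}
    {g : ι → ℝ≥0∞} {c : ℝ≥0∞} (hfg : ∀ i, Tendsto (fun k => f k i) l (𝓝 (g i)))
    (hc : ∀ᶠ k in l, ∑' i, f k i ≤ c) : ∑' i, g i ≤ c := by
  rw [ENNReal.tsum_eq_iSup_sum]
  exact iSup_le fun s => le_of_tendsto (tendsto_finsetSum s fun i _ => hfg i)
    (hc.mono fun k hk => (ENNReal.sum_le_tsum s).trans hk)

namespace IsOrliczFunction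

variable {M : ℝ → ℝ}

theorem nonneg (hM : IsOrliczFunction M) {x : ℝ} (hx : 0 ≤ x) : 0 ≤ M x := by
  simpa [hM.2.2.2.1] using hM.2.1 (mem_Ici.2 le_rfl) hx hx

theorem continuous_abs_div (hM : IsOrliczFunction M) {ρ : ℝ} (hρ : 0 ≤ ρ) :
    Continuous fun v => M (|v| / ρ) :=
  hM.1.comp_continuous (continuous_abs.div_const ρ) fun v => div_nonneg (abs_nonneg v) hρ

theorem abs_add_div_le (hM : IsOrliczFunction M) (a b : ℝ) {ρ₁ ρ₂ : ℝ} (h₁ : 0 < ρ₁)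
    (h₂ : 0 < ρ₂) :
    M (|a + b| / (ρ₁ + ρ₂)) ≤
      ρ₁ / (ρ₁ + ρ₂) * M (|a| / ρ₁) + ρ₂ / (ρ₁ + ρ₂) * M (|b| / ρ₂) := by
  have hconv := hM.2.2.1.2 (mem_Ici.2 (by positivity : 0 ≤ |a| / ρ₁))
    (mem_Ici.2 (by positivity : 0 ≤ |b| / ρ₂)) (by positivity : 0 ≤ ρ₁ / (ρ₁ + ρ₂))
    (by positivity : 0 ≤ ρ₂ / (ρ₁ + ρ₂)) (by field_simp)
  have hmid : ρ₁ / (ρ₁ + ρ₂) * (|a| / ρ₁) + ρ₂ / (ρ₁ + ρ₂) * (|b| / ρ₂) =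
      (|a| + |b|) / (ρ₁ + ρ₂) := by
    field_simp
  simp only [smul_eq_mul, hmid] at hconv
  refine (hM.2.1 (mem_Ici.2 (by positivity)) (mem_Ici.2 (by positivity)) ?_).trans hconv
  gcongr
  exact abs_add_le a b

end IsOrliczFunction

section CesaroModular

variable {M : ℝ → ℝ} {p : ℝ}

theorem cesTerm_nonneg (hM : IsOrliczFunction M) (d : ℕ → ℝ) {ρ : ℝ} (hρ : 0 ≤ ρ) (i : ℕ) :
    0 ≤ cesTerm M d ρ i :=
  mul_nonneg (by positivity) (Finset.sum_nonneg fun _ _ => hM.nonneg (by positivity))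

theorem cesTerm_antitone (hM : IsOrliczFunction M) (d : ℕ → ℝ) {ρ ρ' : ℝ} (hρ : 0 < ρ)
    (hρρ' : ρ ≤ ρ') (i : ℕ) : cesTerm M d ρ' i ≤ cesTerm M d ρ i := by
  have hρ' : 0 < ρ' := hρ.trans_le hρρ'
  refine mul_le_mul_of_nonneg_left (Finset.sum_le_sum fun k _ => ?_) (by positivity)
  exact hM.2.1 (mem_Ici.2 (by positivity)) (mem_Ici.2 (by positivity))
    (by gcongr)

theorem cesTerm_add_le (hM : IsOrliczFunction M) (d e : ℕ → ℝ) {ρ₁ ρ₂ : ℝ} (h₁ : 0 < ρ₁)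
    (h₂ : 0 < ρ₂) (i : ℕ) :
    cesTerm M (d + e) (ρ₁ + ρ₂) i ≤
      ρ₁ / (ρ₁ + ρ₂) * cesTerm M d ρ₁ i + ρ₂ / (ρ₁ + ρ₂) * cesTerm M e ρ₂ i := by
  unfold cesTerm
  calc 1 / (i + 1 : ℝ) * ∑ k ∈ Finset.range (i + 1), M (|d k + e k| / (ρ₁ + ρ₂))
      ≤ 1 / (i + 1 : ℝ) * ∑ k ∈ Finset.range (i + 1),
          (ρ₁ / (ρ₁ + ρ₂) * M (|d k| / ρ₁) + ρ₂ / (ρ₁ + ρ₂) * M (|e k| / ρ₂)) := by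
        gcongr with k
        exact hM.abs_add_div_le (d k) (e k) h₁ h₂
    _ = _ := by rw [Finset.sum_add_distrib, ← Finset.mul_sum, ← Finset.mul_sum]; ring

theorem cesaroSum_antitone (hM : IsOrliczFunction M) (hp : 0 ≤ p) (d : ℕ → ℝ) {ρ ρ' : ℝ}
    (hρ : 0 < ρ) (hρρ' : ρ ≤ ρ') : cesaroSum M p d ρ' ≤ cesaroSum M p d ρ :=
  ENNReal.tsum_le_tsum fun i => ENNReal.rpow_le_rpow
    (ENNReal.ofReal_le_ofReal (cesTerm_antitone hM d hρ hρρ' i)) hp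

theorem cesaroSum_neg (d : ℕ → ℝ) (ρ : ℝ) : cesaroSum M p (-d) ρ = cesaroSum M p d ρ := by
  simp only [cesaroSum, cesTerm, Pi.neg_apply, abs_neg]

theorem cesaroSum_zero (hM : IsOrliczFunction M) (hp : 0 < p) (ρ : ℝ) :
    cesaroSum M p 0 ρ = 0 := by
  simp [cesaroSum, cesTerm, hM.2.2.2.1, ENNReal.zero_rpow_of_pos hp]

/-- Convexity of the modular; it replaces Minkowski's inequality in the triangle inequality
for `luxemburgNorm`. -/
theorem cesaroSum_add_le (hM : IsOrliczFunction M) (hp : 1 ≤ p) (d e : ℕ → ℝ) {ρ₁ ρ₂ : ℝ}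
    (h₁ : 0 < ρ₁) (h₂ : 0 < ρ₂) :
    cesaroSum M p (d + e) (ρ₁ + ρ₂) ≤
      ENNReal.ofReal (ρ₁ / (ρ₁ + ρ₂)) * cesaroSum M p d ρ₁ +
        ENNReal.ofReal (ρ₂ / (ρ₁ + ρ₂)) * cesaroSum M p e ρ₂ := by
  have hp₀ : 0 ≤ p := zero_le_one.trans hp
  set w₁ := ρ₁ / (ρ₁ + ρ₂)
  set w₂ := ρ₂ / (ρ₁ + ρ₂)
  have hw₁ : 0 ≤ w₁ := by positivity
  have hw₂ : 0 ≤ w₂ := by positivity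
  have hw : w₁ + w₂ = 1 := by rw [← add_div, div_self (by positivity)]
  rw [cesaroSum, cesaroSum, cesaroSum, ← ENNReal.tsum_mul_left, ← ENNReal.tsum_mul_left,
    ← ENNReal.tsum_add]
  refine ENNReal.tsum_le_tsum fun i => ?_
  have ha := cesTerm_nonneg hM d h₁.le i
  have hb := cesTerm_nonneg hM e h₂.le i
  calc ENNReal.ofReal (cesTerm M (d + e) (ρ₁ + ρ₂) i) ^ p
      ≤ ENNReal.ofReal ((w₁ * cesTerm M d ρ₁ i + w₂ * cesTerm M e ρ₂ i) ^ p) := by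
        rw [← ENNReal.ofReal_rpow_of_nonneg (by positivity) hp₀]
        gcongr
        exact cesTerm_add_le hM d e h₁ h₂ i
    _ ≤ ENNReal.ofReal (w₁ * cesTerm M d ρ₁ i ^ p + w₂ * cesTerm M e ρ₂ i ^ p) :=
        ENNReal.ofReal_le_ofReal ((convexOn_rpow hp).2 ha hb hw₁ hw₂ hw)
    _ = _ := by
        rw [ENNReal.ofReal_add (by positivity) (by positivity), ENNReal.ofReal_mul hw₁,
          ENNReal.ofReal_mul hw₂, ENNReal.ofReal_rpow_of_nonneg ha hp₀,
          ENNReal.ofReal_rpow_of_nonneg hb hp₀]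

theorem cesaroSum_le_of_tendsto (hM : IsOrliczFunction M) {ρ : ℝ} (hρ : 0 ≤ ρ)
    {d : ℕ → ℕ → ℝ} {e : ℕ → ℝ} (hde : ∀ k, Tendsto (fun l => d l k) atTop (𝓝 (e k)))
    {c : ℝ≥0∞} (hc : ∀ᶠ l in atTop, cesaroSum M p (d l) ρ ≤ c) : cesaroSum M p e ρ ≤ c := by
  refine ENNReal.tsum_le_of_tendsto (fun i => ?_) hc
  refine (ENNReal.continuous_rpow_const.tendsto _).comp
    ((ENNReal.continuous_ofReal.tendsto _).comp ?_)
  exact (tendsto_finsetSum _ fun k _ =>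
    ((hM.continuous_abs_div hρ).tendsto _).comp (hde k)).const_mul _

theorem apply_abs_div_le_of_cesaroSum_le_one (hM : IsOrliczFunction M) (hp : 0 < p)
    {d : ℕ → ℝ} {ρ : ℝ} (hρ : 0 ≤ ρ) (h : cesaroSum M p d ρ ≤ 1) (k : ℕ) :
    M (|d k| / ρ) ≤ k + 1 := by
  have hterm : ENNReal.ofReal (cesTerm M d ρ k) ^ p ≤ 1 := (ENNReal.le_tsum k).trans h
  rw [← ENNReal.one_rpow p, ENNReal.rpow_le_rpow_iff hp, ENNReal.ofReal_le_one, cesTerm,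
    one_div, inv_mul_le_iff₀ (by positivity), mul_one] at hterm
  exact (Finset.single_le_sum (f := fun j => M (|d j| / ρ))
    (fun j _ => hM.nonneg (by positivity)) (Finset.self_mem_range_succ k)).trans
    (by exact_mod_cast hterm)

end CesaroModular

/-- `CpMDelta M p m n` is the preimage of this set under `delta m n`. -/
def cesaroOrliczSet (M : ℝ → ℝ) (p : ℝ) : Set (ℕ → ℝ) :=
  {d | ∃ ρ > 0, cesaroSum M p d ρ < ⊤}

noncomputable def luxemburgNorm (M : ℝ → ℝ) (p : ℝ) (d : ℕ → ℝ) : ℝ :=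
  sInf {ρ : ℝ | 0 < ρ ∧ cesaroSum M p d ρ ^ (1 / p) ≤ 1}

section Luxemburg

variable {M : ℝ → ℝ} {p : ℝ}

theorem cesaroOrliczSet.neg_mem {d : ℕ → ℝ} (hd : d ∈ cesaroOrliczSet M p) :
    -d ∈ cesaroOrliczSet M p := by
  simpa only [cesaroOrliczSet, Set.mem_ofPred_eq, cesaroSum_neg] using hd

theorem cesaroOrliczSet.add_mem (hM : IsOrliczFunction M) (hp : 1 ≤ p) {d e : ℕ → ℝ}
    (hd : d ∈ cesaroOrliczSet M p) (he : e ∈ cesaroOrliczSet M p) :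
    d + e ∈ cesaroOrliczSet M p := by
  obtain ⟨ρ₁, h₁, hd⟩ := hd
  obtain ⟨ρ₂, h₂, he⟩ := he
  refine ⟨ρ₁ + ρ₂, by positivity, (cesaroSum_add_le hM hp d e h₁ h₂).trans_lt ?_⟩
  exact ENNReal.add_lt_top.2 ⟨ENNReal.mul_lt_top ENNReal.ofReal_lt_top hd,
    ENNReal.mul_lt_top ENNReal.ofReal_lt_top he⟩

theorem cesaroOrliczSet.sub_mem (hM : IsOrliczFunction M) (hp : 1 ≤ p) {d e : ℕ → ℝ}
    (hd : d ∈ cesaroOrliczSet M p) (he : e ∈ cesaroOrliczSet M p) :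
    d - e ∈ cesaroOrliczSet M p :=
  sub_eq_add_neg d e ▸ add_mem hM hp hd (neg_mem he)

/-- Enlarging the scale from `ρ` to `ρ (2 + c)`, where `c` is the modular at `ρ`, divides the
modular by at least `2 + c`. -/
theorem exists_cesaroSum_le_one (hM : IsOrliczFunction M) (hp : 1 ≤ p) {d : ℕ → ℝ}
    (hd : d ∈ cesaroOrliczSet M p) : ∃ ρ > 0, cesaroSum M p d ρ ≤ 1 := by
  obtain ⟨ρ, hρ, hfin⟩ := hd
  set c := (cesaroSum M p d ρ).toReal
  have hc : 0 ≤ c := ENNReal.toReal_nonneg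
  have hρ' : 0 < ρ * (c + 1) := by positivity
  refine ⟨ρ + ρ * (c + 1), by positivity, ?_⟩
  have hle := cesaroSum_add_le hM hp d 0 hρ hρ'
  rw [add_zero, cesaroSum_zero hM (by linarith), mul_zero, add_zero,
    ← ENNReal.ofReal_toReal hfin.ne, ← ENNReal.ofReal_mul (by positivity)] at hle
  refine hle.trans (ENNReal.ofReal_le_one.2 ?_)
  rw [div_mul_eq_mul_div, div_le_one (by positivity)]
  nlinarith

theorem cesaroSum_add_le_one (hM : IsOrliczFunction M) (hp : 1 ≤ p) {d e : ℕ → ℝ}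
    {ρ₁ ρ₂ : ℝ} (h₁ : 0 < ρ₁) (h₂ : 0 < ρ₂) (hd : cesaroSum M p d ρ₁ ≤ 1)
    (he : cesaroSum M p e ρ₂ ≤ 1) : cesaroSum M p (d + e) (ρ₁ + ρ₂) ≤ 1 := by
  refine (cesaroSum_add_le hM hp d e h₁ h₂).trans ?_
  calc ENNReal.ofReal (ρ₁ / (ρ₁ + ρ₂)) * cesaroSum M p d ρ₁ +
        ENNReal.ofReal (ρ₂ / (ρ₁ + ρ₂)) * cesaroSum M p e ρ₂
      ≤ ENNReal.ofReal (ρ₁ / (ρ₁ + ρ₂)) * 1 + ENNReal.ofReal (ρ₂ / (ρ₁ + ρ₂)) * 1 := by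
        gcongr
    _ = 1 := by
        rw [mul_one, mul_one, ← ENNReal.ofReal_add (by positivity) (by positivity), ← add_div,
          div_self (by positivity), ENNReal.ofReal_one]

theorem luxemburgNorm_nonneg (d : ℕ → ℝ) : 0 ≤ luxemburgNorm M p d :=
  Real.sInf_nonneg fun _ hρ => hρ.1.le

theorem luxemburgNorm_le (hp : 0 < p) {d : ℕ → ℝ} {ρ : ℝ} (hρ : 0 < ρ)
    (h : cesaroSum M p d ρ ≤ 1) : luxemburgNorm M p d ≤ ρ :=
  csInf_le ⟨0, fun _ hρ => hρ.1.le⟩ ⟨hρ, ENNReal.rpow_le_one h (by positivity)⟩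

theorem cesaroSum_le_one_of_luxemburgNorm_lt (hM : IsOrliczFunction M) (hp : 1 ≤ p)
    {d : ℕ → ℝ} (hd : d ∈ cesaroOrliczSet M p) {ε : ℝ} (hε : luxemburgNorm M p d < ε) :
    cesaroSum M p d ε ≤ 1 := by
  have hp₀ : 0 < p := zero_lt_one.trans_le hp
  obtain ⟨ρ₀, hρ₀, h₀⟩ := exists_cesaroSum_le_one hM hp hd
  obtain ⟨ρ, ⟨hρ, hρ1⟩, hρε⟩ :=
    exists_lt_of_csInf_lt (by exact ⟨ρ₀, hρ₀, ENNReal.rpow_le_one h₀ (by positivity)⟩) hε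
  rw [← ENNReal.one_rpow (1 / p), ENNReal.rpow_le_rpow_iff (by positivity)] at hρ1
  exact (cesaroSum_antitone hM hp₀.le d hρ hρε.le).trans hρ1

theorem luxemburgNorm_zero (hM : IsOrliczFunction M) (hp : 0 < p) :
    luxemburgNorm M p 0 = 0 :=
  le_antisymm (le_of_forall_pos_le_add fun ε hε => by
      simpa using luxemburgNorm_le hp hε ((cesaroSum_zero hM hp ε).trans_le zero_le_one))
    (luxemburgNorm_nonneg 0)

theorem luxemburgNorm_neg (d : ℕ → ℝ) : luxemburgNorm M p (-d) = luxemburgNorm M p d := by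
  simp only [luxemburgNorm, cesaroSum_neg]

theorem luxemburgNorm_add_le (hM : IsOrliczFunction M) (hp : 1 ≤ p) {d e : ℕ → ℝ}
    (hd : d ∈ cesaroOrliczSet M p) (he : e ∈ cesaroOrliczSet M p) :
    luxemburgNorm M p (d + e) ≤ luxemburgNorm M p d + luxemburgNorm M p e := by
  refine le_of_forall_pos_le_add fun ε hε => ?_
  have hρ₁ : 0 < luxemburgNorm M p d + ε / 2 :=
    add_pos_of_nonneg_of_pos (luxemburgNorm_nonneg d) (half_pos hε)
  have hρ₂ : 0 < luxemburgNorm M p e + ε / 2 :=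
    add_pos_of_nonneg_of_pos (luxemburgNorm_nonneg e) (half_pos hε)
  have h₁ := cesaroSum_le_one_of_luxemburgNorm_lt hM hp hd (lt_add_of_pos_right _ (half_pos hε))
  have h₂ := cesaroSum_le_one_of_luxemburgNorm_lt hM hp he (lt_add_of_pos_right _ (half_pos hε))
  calc luxemburgNorm M p (d + e)
      ≤ (luxemburgNorm M p d + ε / 2) + (luxemburgNorm M p e + ε / 2) :=
        luxemburgNorm_le (by linarith) (by positivity) (cesaroSum_add_le_one hM hp hρ₁ hρ₂ h₁ h₂)
    _ = luxemburgNorm M p d + luxemburgNorm M p e + ε := by ring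

end Luxemburg

section Completeness

variable {M : ℝ → ℝ} {p : ℝ}

/-- Since `M → ∞`, the bound `M (|d k| / ρ) ≤ k + 1` coming from the `k`-th Cesàro average keeps
`|d k| / ρ` bounded. -/
theorem abs_le_mul_luxemburgNorm (hM : IsOrliczFunction M) (hp : 1 ≤ p) (k : ℕ) :
    ∃ C > 0, ∀ d ∈ cesaroOrliczSet M p, |d k| ≤ C * luxemburgNorm M p d := by
  obtain ⟨v, hv⟩ := eventually_atTop.1 (hM.2.2.2.2.2.eventually_gt_atTop ((k : ℝ) + 1))
  have hC : 0 < max v 1 := lt_max_of_lt_right one_pos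
  refine ⟨max v 1, hC, fun d hd => (div_le_iff₀' hC).1 ?_⟩
  refine le_of_forall_gt_imp_ge_of_dense fun ρ hρ => (div_le_iff₀' hC).2 ?_
  have hρ₀ : 0 < ρ := (luxemburgNorm_nonneg d).trans_lt hρ
  have hMk := apply_abs_div_le_of_cesaroSum_le_one hM (zero_lt_one.trans_le hp) hρ₀.le
    (cesaroSum_le_one_of_luxemburgNorm_lt hM hp hd hρ) k
  have hlt : |d k| / ρ < v := lt_of_not_ge fun h => (hv _ h).not_ge hMk
  rw [div_lt_iff₀ hρ₀] at hlt
  nlinarith [le_max_left v 1]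

theorem cesaroOrliczSet.cauchySeq_apply (hM : IsOrliczFunction M) (hp : 1 ≤ p)
    {d : ℕ → ℕ → ℝ} (hd : ∀ j, d j ∈ cesaroOrliczSet M p)
    (hcauchy : ∀ ε > 0, ∃ N, ∀ j ≥ N, ∀ l ≥ N, luxemburgNorm M p (d j - d l) < ε) (k : ℕ) :
    CauchySeq fun j => d j k := by
  obtain ⟨C, hC, hCk⟩ := abs_le_mul_luxemburgNorm hM hp k
  refine Metric.cauchySeq_iff.2 fun ε hε => ?_
  obtain ⟨N, hN⟩ := hcauchy (ε / C) (by positivity)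
  refine ⟨N, fun j hj l hl => ?_⟩
  calc dist (d j k) (d l k) = |(d j - d l) k| := rfl
    _ ≤ C * luxemburgNorm M p (d j - d l) := hCk _ (sub_mem hM hp (hd j) (hd l))
    _ < C * (ε / C) := by gcongr; exact hN j hj l hl
    _ = ε := mul_div_cancel₀ ε hC.ne'

/-- The limit is the coordinatewise limit, since the modular is lower semicontinuous under
coordinatewise convergence. -/
theorem cesaroOrliczSet.exists_tendsto_luxemburgNorm (hM : IsOrliczFunction M) (hp : 1 ≤ p)
    {d : ℕ → ℕ → ℝ} (hd : ∀ j, d j ∈ cesaroOrliczSet M p)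
    (hcauchy : ∀ ε > 0, ∃ N, ∀ j ≥ N, ∀ l ≥ N, luxemburgNorm M p (d j - d l) < ε) :
    ∃ w ∈ cesaroOrliczSet M p, Tendsto (fun j => luxemburgNorm M p (d j - w)) atTop (𝓝 0) := by
  choose w hw using fun k => cauchySeq_tendsto_of_complete (cauchySeq_apply hM hp hd hcauchy k)
  have hclose : ∀ ε > 0, ∃ N, ∀ j ≥ N, cesaroSum M p (d j - w) ε ≤ 1 := by
    intro ε hε
    obtain ⟨N, hN⟩ := hcauchy ε hε
    refine ⟨N, fun j hj => cesaroSum_le_of_tendsto hM hε.le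
      (fun k => tendsto_const_nhds.sub (hw k)) (eventually_atTop.2 ⟨N, fun l hl => ?_⟩)⟩
    exact cesaroSum_le_one_of_luxemburgNorm_lt hM hp (sub_mem hM hp (hd j) (hd l)) (hN j hj l hl)
  have hwE : w ∈ cesaroOrliczSet M p := by
    obtain ⟨N, hN⟩ := hclose 1 one_pos
    have hdw : d N - w ∈ cesaroOrliczSet M p :=
      ⟨1, one_pos, (hN N le_rfl).trans_lt ENNReal.one_lt_top⟩
    simpa only [sub_sub_cancel] using sub_mem hM hp (hd N) hdw
  refine ⟨w, hwE, Metric.tendsto_atTop.2 fun ε hε => ?_⟩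
  obtain ⟨N, hN⟩ := hclose (ε / 2) (by positivity)
  refine ⟨N, fun j hj => ?_⟩
  rw [Real.dist_0_eq_abs, abs_of_nonneg (luxemburgNorm_nonneg _)]
  exact (luxemburgNorm_le (zero_lt_one.trans_le hp) (by positivity) (hN j hj)).trans_lt
    (half_lt_self hε)

end Completeness

section Metric

variable {M : ℝ → ℝ} {p : ℝ} {m n : ℕ}

theorem f1_eq (x y : ℕ → ℝ) :
    f1 M p m n x y = ∑ r ∈ Finset.range (m * n), |x r - y r| +
      luxemburgNorm M p (delta m n x - delta m n y) := rfl

theorem f1_self (hM : IsOrliczFunction M) (hp : 0 < p) (x : ℕ → ℝ) : f1 M p m n x x = 0 := by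
  simp [f1_eq, luxemburgNorm_zero hM hp]

theorem f1_comm (x y : ℕ → ℝ) : f1 M p m n x y = f1 M p m n y x := by
  rw [f1_eq, f1_eq, ← neg_sub (delta m n y), luxemburgNorm_neg]
  simp only [abs_sub_comm (x _)]

theorem f1_triangle (hM : IsOrliczFunction M) (hp : 1 ≤ p) {x y z : ℕ → ℝ}
    (hx : x ∈ CpMDelta M p m n) (hy : y ∈ CpMDelta M p m n) (hz : z ∈ CpMDelta M p m n) :
    f1 M p m n x z ≤ f1 M p m n x y + f1 M p m n y z := by
  have hsum : ∑ r ∈ Finset.range (m * n), |x r - z r| ≤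
      ∑ r ∈ Finset.range (m * n), |x r - y r| + ∑ r ∈ Finset.range (m * n), |y r - z r| := by
    rw [← Finset.sum_add_distrib]
    exact Finset.sum_le_sum fun r _ => abs_sub_le _ _ _
  have hlux := luxemburgNorm_add_le hM hp (cesaroOrliczSet.sub_mem hM hp hx hy)
    (cesaroOrliczSet.sub_mem hM hp hy hz)
  rw [sub_add_sub_cancel] at hlux
  rw [f1_eq, f1_eq, f1_eq]
  linarith

theorem abs_sub_le_f1 (x y : ℕ → ℝ) {r : ℕ} (hr : r < m * n) : |x r - y r| ≤ f1 M p m n x y :=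
  (Finset.single_le_sum (f := fun r => |x r - y r|) (fun _ _ => abs_nonneg _)
    (Finset.mem_range.2 hr)).trans (le_add_of_nonneg_right (luxemburgNorm_nonneg _))

theorem luxemburgNorm_le_f1 (x y : ℕ → ℝ) :
    luxemburgNorm M p (delta m n x - delta m n y) ≤ f1 M p m n x y :=
  le_add_of_nonneg_left (Finset.sum_nonneg fun _ _ => abs_nonneg _)

theorem eq_of_f1_eq_zero (hM : IsOrliczFunction M) (hp : 1 ≤ p) (hm : 0 < m) {x y : ℕ → ℝ}
    (hx : x ∈ CpMDelta M p m n) (hy : y ∈ CpMDelta M p m n) (h : f1 M p m n x y = 0) :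
    x = y := by
  refine eq_of_delta_eq hm n (fun r hr => ?_) (funext fun k => ?_)
  · exact sub_eq_zero.1 (abs_nonpos_iff.1 (h ▸ abs_sub_le_f1 x y hr))
  · obtain ⟨C, -, hC⟩ := abs_le_mul_luxemburgNorm hM hp k
    have hk := hC _ (cesaroOrliczSet.sub_mem hM hp hx hy)
    rw [le_antisymm (h ▸ luxemburgNorm_le_f1 x y) (luxemburgNorm_nonneg _), mul_zero,
      abs_nonpos_iff, Pi.sub_apply, sub_eq_zero] at hk
    exact hk

noncomputable abbrev CpMDelta.metricSpace (hM : IsOrliczFunction M) (hp : 1 ≤ p) (hm : 0 < m) :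
    MetricSpace (CpMDelta M p m n) where
  dist x y := f1 M p m n x y
  dist_self x := f1_self hM (zero_lt_one.trans_le hp) x
  dist_comm x y := f1_comm x y
  dist_triangle x y z := f1_triangle hM hp x.2 y.2 z.2
  eq_of_dist_eq_zero {x y} h := Subtype.ext (eq_of_f1_eq_zero hM hp hm x.2 y.2 h)

theorem exists_tendsto_f1_zero (hM : IsOrliczFunction M) (hp : 1 ≤ p) (hm : 0 < m)
    {u : ℕ → ℕ → ℝ} (hu : ∀ j, u j ∈ CpMDelta M p m n)
    (hcauchy : ∀ ε > 0, ∃ N, ∀ j ≥ N, ∀ l ≥ N, f1 M p m n (u j) (u l) < ε) :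
    ∃ X ∈ CpMDelta M p m n, Tendsto (fun j => f1 M p m n (u j) X) atTop (𝓝 0) := by
  obtain ⟨w, hwE, hw⟩ := cesaroOrliczSet.exists_tendsto_luxemburgNorm hM hp hu
    fun ε hε => (hcauchy ε hε).imp fun N hN j hj l hl =>
      (luxemburgNorm_le_f1 _ _).trans_lt (hN j hj l hl)
  have hcoord : ∀ r < m * n, ∃ a, Tendsto (fun j => u j r) atTop (𝓝 a) := fun r hr =>
    cauchySeq_tendsto_of_complete <| Metric.cauchySeq_iff.2 fun ε hε =>
      (hcauchy ε hε).imp fun N hN j hj l hl => (abs_sub_le_f1 _ _ hr).trans_lt (hN j hj l hl)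
  choose! a ha using hcoord
  obtain ⟨X, hX₀, hXΔ⟩ := exists_delta_eq hm n a w
  have hsum : Tendsto (fun j => ∑ r ∈ Finset.range (m * n), |u j r - X r|) atTop (𝓝 0) := by
    have hlim := tendsto_finsetSum (Finset.range (m * n)) fun r hr =>
      ((ha r (Finset.mem_range.1 hr)).sub_const (X r)).abs
    rwa [Finset.sum_eq_zero fun r hr => by
      rw [hX₀ (Finset.mem_range.1 hr), sub_self, abs_zero]] at hlim
  refine ⟨X, show delta m n X ∈ cesaroOrliczSet M p from hXΔ ▸ hwE, ?_⟩
  simpa only [f1_eq, hXΔ, add_zero] using hsum.add hw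

end Metric

theorem CpDelta_complete_metric_general (M : ℝ → ℝ) (hM : IsOrliczFunction M) (p : ℝ) (hp : 1 ≤ p)
    (m n : ℕ) (hm : 1 ≤ m) :
    ∃ inst : MetricSpace (CpMDelta M p m n),
      (∀ a b : CpMDelta M p m n, @dist _ inst.toDist a b = f1 M p m n a.1 b.1) ∧
        @CompleteSpace _ inst.toUniformSpace := by
  let inst := CpMDelta.metricSpace (n := n) hM hp hm
  refine ⟨inst, fun _ _ => rfl, Metric.complete_of_cauchySeq_tendsto fun u hu => ?_⟩
  obtain ⟨X, hX, hlim⟩ :=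
    exists_tendsto_f1_zero hM hp hm (fun j => (u j).2) (Metric.cauchySeq_iff.1 hu)
  exact ⟨⟨X, hX⟩, tendsto_iff_dist_tendsto_zero.2 hlim⟩

theorem CpDelta_complete_metric (M : ℝ → ℝ) (hM : IsOrliczFunction M) (p : ℝ) (hp : 1 ≤ p)
    (m n : ℕ) (hm : 1 ≤ m) (hn : 1 ≤ n) :
    ∃ inst : MetricSpace (CpMDelta M p m n),
      (∀ a b : CpMDelta M p m n, @dist _ inst.toDist a b = f1 M p m n a.1 b.1) ∧
        @CompleteSpace _ inst.toUniformSpace :=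
  CpDelta_complete_metric_general M hM p hp m n hm
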